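/- arXiv:2004.02642 — 3 statements merged into one kernel-verified Lean document; each statement's English description precedes it below -/
import Mathlib

section
/- Let X and Y be independent nonnegative random variables, where X has density f_X and Y has a continuous CDF F_Y with F_Y(y) = 0 for y ≤ 0. Let Px, Py, Pth, ε2, ε3, γ̄, Θ be positive reals, and assume Δ1 := (Pth·Θ − γ̄·ε2·Py)/(γ̄·ε3·Py + Px·Θ) satisfies 0 ≤ Δ1. Then Pr[ Y < γ̄·(ε2 + ε3·X)/Θ and Px·X + Py·Y ≤ Pth ] = ∫_{Δ1}^{Pth/Px} f_X(x)·F_Y((Pth − Px·x)/Py) dx + ∫_{0}^{Δ1} f_X(x)·F_Y(γ̄·(ε2 + ε3·x)/Θ) dx. -/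
open MeasureTheory Set Filter

/-!
Write `g x = γ̄ (ε2 + ε3 x) / Θ` and `h x = (Pth - Px x) / Py`, so that the event is
`{Y < g X, Y ≤ h X}`. By independence its probability is the integral, against the law of `X`, of
the mass that the law of `Y` gives to `{y < g x, y ≤ h x}`; since `F_Y` is continuous, `Y` has no
atoms and that mass is `F_Y (min (g x) (h x))`. The two lines cross at `Δ1`, so the minimum is `g`
on `[0, Δ1]` and `h` on `[Δ1, Pth / Px]`, while the integrand vanishes for `x < 0` (where `X` has
no mass) and for `x > Pth / Px` (where `h x < 0`).
-/

section

open ProbabilityTheory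

lemma nullSingletonClass_of_continuous_cdf {μ : Measure ℝ} [IsProbabilityMeasure μ]
    (h : Continuous (cdf μ)) : NullSingletonClass μ where
  measure_singleton a := by
    rw [← measure_cdf μ, StieltjesFunction.measure_singleton,
      h.continuousWithinAt.leftLim_eq, sub_self, ENNReal.ofReal_zero]

lemma measure_lt_and_le_eq_measure_Iic_min {μ : Measure ℝ} [NullSingletonClass μ] (a b : ℝ) :
    μ {y | y < a ∧ y ≤ b} = μ (Iic (min a b)) := by
  rw [← Iic_inter_Iic]
  exact measure_congr (Iio_ae_eq_Iic.inter EventuallyEq.rfl)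

lemma ProbabilityTheory.IndepFun.measure_preimage_eq_lintegral {Ω α β : Type*}
    [MeasurableSpace Ω] [MeasurableSpace α] [MeasurableSpace β] {μ : Measure Ω} [IsFiniteMeasure μ]
    {X : Ω → α} {Y : Ω → β} (hX : Measurable X) (hY : Measurable Y) (hXY : IndepFun X Y μ)
    {S : Set (α × β)} (hS : MeasurableSet S) :
    μ ((fun ω => (X ω, Y ω)) ⁻¹' S) = ∫⁻ x, μ.map Y (Prod.mk x ⁻¹' S) ∂μ.map X := by
  rw [← Measure.map_apply (hX.prodMk hY) hS,
    hXY.map_prod_eq_prod_map_map hX.aemeasurable hY.aemeasurable, Measure.prod_apply hS]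

section Density

variable {α : Type*} [MeasurableSpace α] {μ ρ : Measure α} {f : α → ℝ}

lemma integrable_of_measureReal_eq_setIntegral [IsFiniteMeasure μ] [NeZero μ]
    (hf : ∀ s, MeasurableSet s → μ.real s = ∫ x in s, f x ∂ρ) : Integrable f ρ := by
  by_contra hnot
  have huniv := hf univ .univ
  rw [Measure.restrict_univ, integral_undef hnot] at huniv
  exact measureReal_univ_ne_zero huniv

lemma ae_nonneg_of_measureReal_eq_setIntegral (hfi : Integrable f ρ)
    (hf : ∀ s, MeasurableSet s → μ.real s = ∫ x in s, f x ∂ρ) : 0 ≤ᵐ[ρ] f :=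
  ae_nonneg_of_forall_setIntegral_nonneg hfi fun s hs _ => hf s hs ▸ measureReal_nonneg

lemma eq_withDensity_of_measureReal_eq_setIntegral [IsFiniteMeasure μ] (hfi : Integrable f ρ)
    (hf : ∀ s, MeasurableSet s → μ.real s = ∫ x in s, f x ∂ρ) :
    μ = ρ.withDensity fun x => ENNReal.ofReal (f x) := by
  ext s hs
  rw [withDensity_apply _ hs, ← ofReal_measureReal, hf s hs,
    ofReal_integral_eq_lintegral_ofReal hfi.integrableOn
      (ae_restrict_of_ae (ae_nonneg_of_measureReal_eq_setIntegral hfi hf))]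

lemma integral_eq_integral_mul_of_measureReal_eq_setIntegral [IsFiniteMeasure μ]
    (hfi : Integrable f ρ) (hf : ∀ s, MeasurableSet s → μ.real s = ∫ x in s, f x ∂ρ) (g : α → ℝ) :
    ∫ x, g x ∂μ = ∫ x, f x * g x ∂ρ := by
  have hf_nonneg := ae_nonneg_of_measureReal_eq_setIntegral hfi hf
  rw [eq_withDensity_of_measureReal_eq_setIntegral hfi hf]
  change ∫ x, g x ∂ρ.withDensity (fun x => ((f x).toNNReal : ENNReal)) = _
  rw [integral_withDensity_eq_integral_smul₀ hfi.aemeasurable.real_toNNReal]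
  refine integral_congr_ae ?_
  filter_upwards [hf_nonneg] with x hx
  rw [NNReal.smul_def, Real.coe_toNNReal _ hx, smul_eq_mul]

lemma ae_restrict_eq_zero_of_measure_eq_zero (hfi : Integrable f ρ)
    (hf : ∀ s, MeasurableSet s → μ.real s = ∫ x in s, f x ∂ρ) {s : Set α} (hs : MeasurableSet s)
    (hμs : μ s = 0) : f =ᵐ[ρ.restrict s] 0 := by
  rw [← setIntegral_eq_zero_iff_of_nonneg_ae
    (ae_restrict_of_ae (ae_nonneg_of_measureReal_eq_setIntegral hfi hf)) hfi.integrableOn,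
    ← hf s hs, measureReal_def, hμs, ENNReal.toReal_zero]

end Density

lemma ProbabilityTheory.IndepFun.measureReal_lt_and_le_eq_integral {Ω : Type*}
    [MeasurableSpace Ω] {μ : Measure Ω} [IsProbabilityMeasure μ] {X Y : Ω → ℝ} (hX : Measurable X)
    (hY : Measurable Y) (hXY : IndepFun X Y μ) {fX : ℝ → ℝ} (hfXi : Integrable fX)
    (hfX : ∀ s, MeasurableSet s → (μ.map X).real s = ∫ x in s, fX x)
    (hY_cdf : Continuous (cdf (μ.map Y))) {g h : ℝ → ℝ} (hg : Measurable g) (hh : Measurable h) :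
    μ.real {ω | Y ω < g (X ω) ∧ Y ω ≤ h (X ω)} =
      ∫ x, fX x * cdf (μ.map Y) (min (g x) (h x)) := by
  have := Measure.isProbabilityMeasure_map (μ := μ) hY.aemeasurable
  have := nullSingletonClass_of_continuous_cdf hY_cdf
  have hS : MeasurableSet {p : ℝ × ℝ | p.2 < g p.1 ∧ p.2 ≤ h p.1} :=
    (measurableSet_lt measurable_snd (hg.comp measurable_fst)).inter
      (measurableSet_le measurable_snd (hh.comp measurable_fst))
  have hslice : ∀ x, μ.map Y (Prod.mk x ⁻¹' {p : ℝ × ℝ | p.2 < g p.1 ∧ p.2 ≤ h p.1}) =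
      ENNReal.ofReal (cdf (μ.map Y) (min (g x) (h x))) := fun x => by
    rw [ofReal_cdf]
    exact measure_lt_and_le_eq_measure_Iic_min (μ := μ.map Y) (g x) (h x)
  rw [← integral_eq_integral_mul_of_measureReal_eq_setIntegral hfXi hfX,
    integral_eq_lintegral_of_nonneg_ae (ae_of_all _ fun x => cdf_nonneg _ _)
      (hY_cdf.measurable.comp (hg.min hh)).aestronglyMeasurable,
    ← lintegral_congr hslice, ← hXY.measure_preimage_eq_lintegral hX hY hS]
  rfl

lemma integral_mul_comp_min_eq_add {f F g h : ℝ → ℝ} {a b c : ℝ} (hac : a ≤ c) (hcb : c ≤ b)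
    (hf : Integrable f) (hF : Continuous F) (hg : Continuous g) (hh : Continuous h)
    (hf_lt : ∀ᵐ x, x < a → f x = 0) (hF_nonpos : ∀ y ≤ 0, F y = 0)
    (hh_nonpos : ∀ x, b < x → h x ≤ 0) (hgh : ∀ x, g x ≤ h x ↔ x ≤ c) :
    ∫ x, f x * F (min (g x) (h x)) =
      (∫ x in c..b, f x * F (h x)) + ∫ x in a..c, f x * F (g x) := by
  have hint : ∀ u v, IntervalIntegrable (fun x => f x * F (min (g x) (h x))) volume u v :=
    fun u v => hf.intervalIntegrable.mul_continuousOn (by fun_prop)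
  have hsupp : ∀ᵐ x, x ∉ Icc a b → f x * F (min (g x) (h x)) = 0 := by
    filter_upwards [hf_lt] with x hx hxab
    rcases not_and_or.1 hxab with hxa | hxb
    · rw [hx (not_le.1 hxa), zero_mul]
    · rw [hF_nonpos _ ((min_le_right _ _).trans (hh_nonpos x (not_le.1 hxb))), mul_zero]
  calc ∫ x, f x * F (min (g x) (h x))
      = ∫ x in a..b, f x * F (min (g x) (h x)) := by
        rw [intervalIntegral.integral_of_le (hac.trans hcb), ← integral_Icc_eq_integral_Ioc,
          setIntegral_eq_integral_of_ae_compl_eq_zero hsupp]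
    _ = (∫ x in a..c, f x * F (min (g x) (h x))) +
          ∫ x in c..b, f x * F (min (g x) (h x)) :=
        (intervalIntegral.integral_add_adjacent_intervals (hint a c) (hint c b)).symm
    _ = (∫ x in c..b, f x * F (h x)) + ∫ x in a..c, f x * F (g x) := by
        rw [add_comm]
        congr 1 <;> refine intervalIntegral.integral_congr_ae (ae_of_all _ fun x hx => ?_)
        · rw [uIoc_of_le hcb] at hx
          rw [min_eq_right (le_of_not_ge ((hgh x).not.2 (not_le.2 hx.1)))]
        · rw [uIoc_of_le hac] at hx
          rw [min_eq_left ((hgh x).2 hx.2)]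

end

section Crossing

variable {γ ε2 ε3 Θ Px Py Pth : ℝ}

lemma div_le_div_iff_le_crossing (hΘ : 0 < Θ) (hPy : 0 < Py)
    (hD : 0 < γ * ε3 * Py + Px * Θ) (x : ℝ) :
    γ * (ε2 + ε3 * x) / Θ ≤ (Pth - Px * x) / Py ↔
      x ≤ (Pth * Θ - γ * ε2 * Py) / (γ * ε3 * Py + Px * Θ) := by
  rw [div_le_div_iff₀ hΘ hPy, le_div_iff₀ hD]
  constructor <;> intro hx <;> linarith

lemma crossing_le_div (hγ : 0 < γ) (hε2 : 0 < ε2) (hε3 : 0 < ε3) (hPx : 0 < Px) (hPy : 0 < Py)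
    (hPth : 0 < Pth) (hD : 0 < γ * ε3 * Py + Px * Θ) :
    (Pth * Θ - γ * ε2 * Py) / (γ * ε3 * Py + Px * Θ) ≤ Pth / Px := by
  have : 0 < γ * ε2 * Py * Px := by positivity
  have : 0 < Pth * (γ * ε3 * Py) := by positivity
  rw [div_le_div_iff₀ hD hPx]
  linarith

end Crossing

theorem stmt_3_general {Ω : Type*} [MeasurableSpace Ω]
    (ℙ : Measure Ω) [IsProbabilityMeasure ℙ]
    (X Y : Ω → ℝ) (hmX : Measurable X) (hmY : Measurable Y)
    (hindep : ProbabilityTheory.IndepFun X Y ℙ)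
    (hXpos : ∀ᵐ ω ∂ℙ, 0 ≤ X ω)
    (fX : ℝ → ℝ)
    (hfX : ∀ s : Set ℝ, MeasurableSet s → (ℙ (X ⁻¹' s)).toReal = ∫ x in s, fX x)
    (FY : ℝ → ℝ) (hFYcont : Continuous FY)
    (hFY : ∀ y : ℝ, FY y = (ℙ {ω | Y ω ≤ y}).toReal)
    (hFY0 : ∀ y : ℝ, y ≤ 0 → FY y = 0)
    (Px Py Pth ε2 ε3 γbar Θ : ℝ)
    (hPx : 0 < Px) (hPy : 0 < Py) (hPth : 0 < Pth)
    (hε2 : 0 < ε2) (hε3 : 0 < ε3) (hγ : 0 < γbar) (hΘ : 0 < Θ)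
    (Δ1 : ℝ) (hΔ1 : Δ1 = (Pth * Θ - γbar * ε2 * Py) / (γbar * ε3 * Py + Px * Θ))
    (hΔ1nonneg : 0 ≤ Δ1) :
    (ℙ {ω | Y ω < γbar * (ε2 + ε3 * X ω) / Θ ∧ Px * X ω + Py * Y ω ≤ Pth}).toReal =
      (∫ x in Δ1..(Pth / Px), fX x * FY ((Pth - Px * x) / Py)) +
      ∫ x in (0 : ℝ)..Δ1, fX x * FY (γbar * (ε2 + ε3 * x) / Θ) := by
  set g : ℝ → ℝ := fun x => γbar * (ε2 + ε3 * x) / Θ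
  set h : ℝ → ℝ := fun x => (Pth - Px * x) / Py
  have := Measure.isProbabilityMeasure_map (μ := ℙ) hmX.aemeasurable
  have := Measure.isProbabilityMeasure_map (μ := ℙ) hmY.aemeasurable
  have hFY_cdf : FY = ProbabilityTheory.cdf (ℙ.map Y) := funext fun y => by
    rw [hFY, ProbabilityTheory.cdf_eq_real, map_measureReal_apply hmY measurableSet_Iic]
    rfl
  have hdens : ∀ s, MeasurableSet s → (ℙ.map X).real s = ∫ x in s, fX x := fun s hs => by
    rw [map_measureReal_apply hmX hs]
    exact hfX s hs
  have hfXi : Integrable fX := integrable_of_measureReal_eq_setIntegral hdens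
  have hfX_neg : ∀ᵐ x, x < 0 → fX x = 0 := by
    refine (ae_restrict_iff' measurableSet_Iio).1
      (ae_restrict_eq_zero_of_measure_eq_zero hfXi hdens measurableSet_Iio ?_)
    rw [Measure.map_apply hmX measurableSet_Iio]
    exact measure_mono_null (fun ω hω => not_le.2 hω) (ae_iff.1 hXpos)
  have hD : 0 < γbar * ε3 * Py + Px * Θ := by positivity
  have hcross : ∀ x, g x ≤ h x ↔ x ≤ Δ1 := hΔ1 ▸ div_le_div_iff_le_crossing hΘ hPy hD
  have hΔ1_le : Δ1 ≤ Pth / Px := hΔ1 ▸ crossing_le_div hγ hε2 hε3 hPx hPy hPth hD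
  have hh_nonpos : ∀ x, Pth / Px < x → h x ≤ 0 := fun x hx =>
    div_nonpos_of_nonpos_of_nonneg (by linarith [(div_lt_iff₀ hPx).1 hx]) hPy.le
  have hevent : {ω | Y ω < γbar * (ε2 + ε3 * X ω) / Θ ∧ Px * X ω + Py * Y ω ≤ Pth} =
      {ω | Y ω < g (X ω) ∧ Y ω ≤ h (X ω)} := by
    ext ω
    simp only [g, h, le_div_iff₀ hPy]
    constructor <;> rintro ⟨hlt, hle⟩ <;> exact ⟨hlt, by linarith⟩
  change ℙ.real _ = _
  rw [hevent, hindep.measureReal_lt_and_le_eq_integral hmX hmY hfXi hdens (hFY_cdf ▸ hFYcont)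
    (by fun_prop) (by fun_prop), ← hFY_cdf]
  exact integral_mul_comp_min_eq_add hΔ1nonneg hΔ1_le hfXi hFYcont (by fun_prop) (by fun_prop)
    hfX_neg hFY0 hh_nonpos hcross

/-- Double-integral decomposition used to compute the CDF of the linear-regime
relay SNR jointly with the non-saturation event `Px·X + Py·Y ≤ Pth` of the
nonlinear energy harvester: the plane splits at the crossing point `Δ1` of the
lines `γ̄(ε2+ε3·x)/Θ` and `(Pth − Px·x)/Py`. -/
theorem stmt_3 {Ω : Type*} [MeasurableSpace Ω]
    (ℙ : Measure Ω) [IsProbabilityMeasure ℙ]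
    (X Y : Ω → ℝ) (hmX : Measurable X) (hmY : Measurable Y)
    (hindep : ProbabilityTheory.IndepFun X Y ℙ)
    (hXpos : ∀ᵐ ω ∂ℙ, 0 ≤ X ω) (hYpos : ∀ᵐ ω ∂ℙ, 0 ≤ Y ω)
    (fX : ℝ → ℝ)
    (hfX : ∀ s : Set ℝ, MeasurableSet s → (ℙ (X ⁻¹' s)).toReal = ∫ x in s, fX x)
    (FY : ℝ → ℝ) (hFYcont : Continuous FY)
    (hFY : ∀ y : ℝ, FY y = (ℙ {ω | Y ω ≤ y}).toReal)
    (hFY0 : ∀ y : ℝ, y ≤ 0 → FY y = 0)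
    (Px Py Pth ε2 ε3 γbar Θ : ℝ)
    (hPx : 0 < Px) (hPy : 0 < Py) (hPth : 0 < Pth)
    (hε2 : 0 < ε2) (hε3 : 0 < ε3) (hγ : 0 < γbar) (hΘ : 0 < Θ)
    (Δ1 : ℝ) (hΔ1 : Δ1 = (Pth * Θ - γbar * ε2 * Py) / (γbar * ε3 * Py + Px * Θ))
    (hΔ1nonneg : 0 ≤ Δ1) :
    (ℙ {ω | Y ω < γbar * (ε2 + ε3 * X ω) / Θ ∧ Px * X ω + Py * Y ω ≤ Pth}).toReal =
      (∫ x in Δ1..(Pth / Px), fX x * FY ((Pth - Px * x) / Py)) +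
      ∫ x in (0 : ℝ)..Δ1, fX x * FY (γbar * (ε2 + ε3 * x) / Θ) :=
  stmt_3_general ℙ X Y hmX hmY hindep hXpos fX hfX FY hFYcont hFY hFY0 Px Py Pth ε2 ε3 γbar Θ hPx
    hPy hPth hε2 hε3 hγ hΘ Δ1 hΔ1 hΔ1nonneg
end

section
/- Let X and Y be independent random variables, X Gamma-distributed with positive integer shape mX and rate mX/ΩX, Y Gamma-distributed with positive integer shape mY and rate mY/ΩY, where ΩX, ΩY > 0. Let ε1, ε2, ε3, ε4, γ̄, Px, Py, Pth be positive reals with Θ := ε1 − ε4·γ̄ > 0, let Δ1 := (Pth·Θ − γ̄·ε2·Py)/(γ̄·ε3·Py + Px·Θ) and assume Δ1 ≥ 0, and let Ξ := mY·Px/(ΩY·Py) − mX/ΩX with Ξ ≠ 0, Ψ := mX/ΩX + mY·γ̄·ε3/(ΩY·Θ). Then Pr[ ε1·Y/(ε2 + ε3·X + ε4·Y) < γ̄ and Px·X + Py·Y ≤ Pth ] = Υ[mX, mX·Pth/(ΩX·Px)]/Γ[mX] − ((mX/ΩX)^{mX}·e^{−mY·Pth/(ΩY·Py)}/Γ[mX])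 · Σ_{k=0}^{mY−1} ((mY/(ΩY·Py))^k/k!) · Σ_{q=0}^{k} C(k,q)·Pth^q·(−Px)^{k−q} · Σ_{t=0}^{ν} ((−1)^t·t!·C(ν,t)/Ξ^{t+1}) · ( e^{Ξ·Pth/Px}·(Pth/Px)^{ν−t} − e^{Ξ·Δ1}·Δ1^{ν−t} ) − ((mX/ΩX)^{mX}/Γ[mX])·e^{−mY·γ̄·ε2/(ΩY·Θ)} · Σ_{p=0}^{mY−1} ((mY/(ΩY·Θ))^p/p!) · Σ_{n=0}^{p} C(p,n)·γ̄^p·ε2^n·ε3^{p−n} · Υ[mX + p − n, Ψ·Δ1] · Ψ^{−(mX+p−n)}, where ν := mX + k − q − 1 and C(·,·) denotes the binomial coefficient. -/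
/-!
By independence the probability is `∫ f_X(x) F_Y(min (g x) (L x)) dx` over `0 ≤ x ≤ Pth/Px`,
where `y < g x = γ̄ (ε2 + ε3 x) / Θ` is the SNR condition and `y ≤ L x = (Pth - Px x) / Py` the
harvester condition; the two lines cross at `x = Δ1`. For integer shape the Gamma CDF is the Erlang
CDF `1 - e^{-rz} Σ_{k<n} (rz)^k / k!`, so after splitting at `Δ1` and expanding `(u + v x)^k`
binomially every piece is a multiple of `∫ x^ν e^{c x} dx`: over `[Δ1, Pth/Px]` (where `c = Ξ`) it
has an elementary antiderivative, over `[0, Δ1]` (where `c = -Ψ`) it is a lower incomplete gamma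
function.
-/

open MeasureTheory Finset

/-- Lower incomplete gamma function `Υ[s, x] = ∫_0^x t^{s−1} e^{−t} dt`. -/
noncomputable def lowerIncGamma (s x : ℝ) : ℝ :=
  ∫ t in (0 : ℝ)..x, t ^ (s - 1) * Real.exp (-t)

section

open Real ProbabilityTheory
open scoped Nat

lemma factorial_mul_choose_succ (ν t : ℕ) :
    (t + 1)! * ν.choose (t + 1) = t ! * ν.choose t * (ν - t) := by
  rw [Nat.factorial_succ, mul_assoc, mul_comm (t + 1), mul_assoc, Nat.choose_succ_right_eq,
    mul_assoc]

lemma hasDerivAt_exp_mul_mul_sum_pow (ν : ℕ) {a : ℝ} (ha : a ≠ 0) (x : ℝ) :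
    HasDerivAt (fun y => exp (a * y) * ∑ t ∈ range (ν + 1),
        (-1) ^ t * t ! * ν.choose t / a ^ (t + 1) * y ^ (ν - t))
      (x ^ ν * exp (a * x)) x := by
  set c : ℕ → ℝ := fun t => (-1) ^ t * t ! * ν.choose t / a ^ (t + 1)
  have hexp : HasDerivAt (fun y => exp (a * y)) (exp (a * x) * a) x :=
    ((hasDerivAt_id x).const_mul a).exp.congr_deriv (by simp)
  have hsum : HasDerivAt (fun y => ∑ t ∈ range (ν + 1), c t * y ^ (ν - t))
      (∑ t ∈ range (ν + 1), c t * ((ν - t : ℕ) * x ^ (ν - t - 1))) x :=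
    HasDerivAt.fun_sum fun t _ => (hasDerivAt_pow (ν - t) x).const_mul _
  refine (hexp.mul hsum).congr_deriv ?_
  set d : ℕ → ℝ := fun t => (-1) ^ t * t ! * ν.choose t / a ^ t * x ^ (ν - t)
  have htel : ∀ t ∈ range (ν + 1),
      a * (c t * x ^ (ν - t)) + c t * ((ν - t : ℕ) * x ^ (ν - t - 1)) = d t - d (t + 1) := by
    intro t _
    have hfc : ((t + 1)! : ℝ) * ν.choose (t + 1) = t ! * ν.choose t * (ν - t : ℕ) := by
      exact_mod_cast factorial_mul_choose_succ ν t
    simp only [c, d]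
    rw [show ν - (t + 1) = ν - t - 1 by omega, pow_succ (-1 : ℝ) t]
    field_simp
    linear_combination (-(a ^ t) * x ^ (ν - t - 1)) * hfc
  have hsum_eq : a * ∑ t ∈ range (ν + 1), c t * x ^ (ν - t)
      + ∑ t ∈ range (ν + 1), c t * ((ν - t : ℕ) * x ^ (ν - t - 1)) = x ^ ν := by
    rw [mul_sum, ← sum_add_distrib, sum_congr rfl htel, sum_range_sub']
    simp [d, Nat.choose_succ_self]
  linear_combination exp (a * x) * hsum_eq

theorem integral_pow_mul_exp (ν : ℕ) {a : ℝ} (ha : a ≠ 0) (b c : ℝ) :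
    ∫ x in b..c, x ^ ν * exp (a * x)
      = ∑ t ∈ range (ν + 1), (-1) ^ t * t ! * ν.choose t / a ^ (t + 1) *
          (exp (a * c) * c ^ (ν - t) - exp (a * b) * b ^ (ν - t)) := by
  rw [intervalIntegral.integral_eq_sub_of_hasDerivAt
      (fun x _ => hasDerivAt_exp_mul_mul_sum_pow ν ha x)
      (Continuous.intervalIntegrable (by fun_prop) _ _), mul_sum, mul_sum,
    ← sum_sub_distrib]
  exact sum_congr rfl fun t _ => by ring

lemma lowerIncGamma_natCast {n : ℕ} (hn : 0 < n) (x : ℝ) :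
    lowerIncGamma n x = ∫ t in (0 : ℝ)..x, t ^ (n - 1) * exp (-t) := by
  rw [lowerIncGamma, ← Nat.cast_pred hn]
  simp_rw [Real.rpow_natCast]

theorem integral_pow_mul_exp_neg_mul (ν : ℕ) {a : ℝ} (ha : a ≠ 0) (z : ℝ) :
    ∫ x in (0 : ℝ)..z, x ^ ν * exp (-(a * x))
      = lowerIncGamma (ν + 1 : ℕ) (a * z) / a ^ (ν + 1) := by
  have hsub := intervalIntegral.smul_integral_comp_mul_left
    (fun t => t ^ ν * exp (-t)) a (a := 0) (b := z)
  simp only [mul_zero, smul_eq_mul, mul_pow, mul_assoc,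
    intervalIntegral.integral_const_mul] at hsub
  rw [lowerIncGamma_natCast (by omega : 0 < ν + 1), Nat.add_sub_cancel, ← hsub]
  field_simp
  ring

noncomputable def erlangPDF (n : ℕ) (r x : ℝ) : ℝ :=
  r ^ n / Gamma n * x ^ (n - 1) * exp (-(r * x))

noncomputable def erlangTail (n : ℕ) (r z : ℝ) : ℝ :=
  exp (-(r * z)) * ∑ k ∈ range n, (r * z) ^ k / k !

lemma continuous_erlangPDF (n : ℕ) (r : ℝ) : Continuous (erlangPDF n r) := by
  unfold erlangPDF; fun_prop

lemma continuous_erlangTail (n : ℕ) (r : ℝ) : Continuous (erlangTail n r) := by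
  unfold erlangTail; fun_prop

lemma erlangTail_zero_right {n : ℕ} (hn : 0 < n) (r : ℝ) : erlangTail n r 0 = 1 := by
  obtain ⟨m, rfl⟩ : ∃ m, n = m + 1 := ⟨n - 1, by omega⟩
  simp [erlangTail, sum_range_succ']

lemma hasDerivAt_erlangTail_succ (n : ℕ) (r z : ℝ) :
    HasDerivAt (erlangTail (n + 1) r) (-(r ^ (n + 1) / n ! * z ^ n * exp (-(r * z)))) z := by
  have hexp : HasDerivAt (fun z => exp (-(r * z))) (-(r * exp (-(r * z)))) z :=
    ((hasDerivAt_id z).const_mul r).fun_neg.exp.congr_deriv (by simp only [id]; ring)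
  induction n with
  | zero =>
    have h1 : erlangTail 1 r = fun z => exp (-(r * z)) := by ext; simp [erlangTail]
    simpa [h1] using hexp
  | succ n ih =>
    have hterm : HasDerivAt (fun z => exp (-(r * z)) * ((r * z) ^ (n + 1) / (n + 1)!))
        (-(r * exp (-(r * z))) * ((r * z) ^ (n + 1) / (n + 1)!)
          + exp (-(r * z)) * ((n + 1 : ℕ) * (r * z) ^ n * r / (n + 1)!)) z :=
      hexp.mul ((((hasDerivAt_id z).const_mul r).pow (n + 1)).div_const _ |>.congr_deriv
        (by simp))
    have hsplit : erlangTail (n + 2) r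
        = fun z => erlangTail (n + 1) r z + exp (-(r * z)) * ((r * z) ^ (n + 1) / (n + 1)!) := by
      ext z; simp only [erlangTail, sum_range_succ _ (n + 1)]; ring
    rw [hsplit]
    refine (ih.add hterm).congr_deriv ?_
    rw [Nat.factorial_succ]
    push_cast
    field_simp
    ring

lemma Gamma_natCast {n : ℕ} (hn : 0 < n) : Gamma n = (n - 1)! := by
  obtain ⟨m, rfl⟩ : ∃ m, n = m + 1 := ⟨n - 1, by omega⟩
  simp [Gamma_nat_eq_factorial]

lemma hasDerivAt_erlangTail {n : ℕ} (hn : 0 < n) (r z : ℝ) :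
    HasDerivAt (erlangTail n r) (-erlangPDF n r z) z := by
  obtain ⟨m, rfl⟩ : ∃ m, n = m + 1 := ⟨n - 1, by omega⟩
  convert hasDerivAt_erlangTail_succ m r z using 2
  rw [erlangPDF, Gamma_natCast hn]
  simp

theorem integral_erlangPDF {n : ℕ} (hn : 0 < n) (r z : ℝ) :
    ∫ x in (0 : ℝ)..z, erlangPDF n r x = 1 - erlangTail n r z := by
  rw [intervalIntegral.integral_eq_sub_of_hasDerivAt (f := fun x => -erlangTail n r x)
      (fun x _ => (hasDerivAt_erlangTail hn r x).neg |>.congr_deriv (neg_neg _))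
      ((continuous_erlangPDF n r).intervalIntegrable _ _), erlangTail_zero_right hn]
  ring

theorem integral_erlangPDF_eq_lowerIncGamma {n : ℕ} (hn : 0 < n) {r : ℝ} (hr : r ≠ 0) (z : ℝ) :
    ∫ x in (0 : ℝ)..z, erlangPDF n r x = lowerIncGamma n (r * z) / Gamma n := by
  obtain ⟨m, rfl⟩ : ∃ m, n = m + 1 := ⟨n - 1, by omega⟩
  simp only [erlangPDF, mul_assoc, intervalIntegral.integral_const_mul,
    Nat.add_sub_cancel]
  rw [integral_pow_mul_exp_neg_mul m hr]
  field_simp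

lemma gammaPDFReal_natCast {n : ℕ} (hn : 0 < n) (r : ℝ) {x : ℝ} (hx : 0 ≤ x) :
    gammaPDFReal n r x = erlangPDF n r x := by
  rw [gammaPDFReal, if_pos hx, erlangPDF, ← Nat.cast_pred hn, Real.rpow_natCast,
    Real.rpow_natCast]

lemma gammaMeasure_Iio_zero (a r : ℝ) : gammaMeasure a r (Set.Iio 0) = 0 := by
  rw [gammaMeasure, withDensity_apply _ measurableSet_Iio]
  exact lintegral_gammaPDF_of_nonpos le_rfl

instance (a r : ℝ) : NullSingletonClass (gammaMeasure a r) := by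
  unfold gammaMeasure; infer_instance

lemma cdf_gammaMeasure_natCast {n : ℕ} (hn : 0 < n) {r : ℝ} (hr : 0 < r) {z : ℝ} (hz : 0 ≤ z) :
    cdf (gammaMeasure n r) z = 1 - erlangTail n r z := by
  rw [cdf_gammaMeasure_eq_integral (by positivity) hr, ← integral_erlangPDF hn,
    intervalIntegral.integral_of_le hz, setIntegral_eq_of_subset_of_ae_sdiff_eq_zero
      measurableSet_Iic.nullMeasurableSet Set.Ioc_subset_Iic_self ?_]
  · exact setIntegral_congr_fun measurableSet_Ioc fun x hx => gammaPDFReal_natCast hn r hx.1.le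
  · filter_upwards [volume.ae_ne 0] with x hx0 hx
    have hneg : x < 0 := lt_of_le_of_ne (not_lt.mp fun h => hx.2 ⟨h, hx.1⟩) hx0
    simp [gammaPDFReal, not_le.mpr hneg]

lemma cdf_gammaMeasure_of_neg {a r : ℝ} (ha : 0 < a) (hr : 0 < r) {z : ℝ} (hz : z < 0) :
    cdf (gammaMeasure a r) z = 0 := by
  rw [cdf_gammaMeasure_eq_integral ha hr]
  exact setIntegral_eq_zero_of_forall_eq_zero fun x (hx : x ≤ z) =>
    by simp [gammaPDFReal, not_le.mpr (hx.trans_lt hz)]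

theorem integral_gammaMeasure_natCast_eq_intervalIntegral {n : ℕ} (hn : 0 < n) {r : ℝ}
    (hr : 0 < r) {f : ℝ → ℝ} {T : ℝ} (hT : 0 ≤ T) (hf : ∀ x, T < x → f x = 0) :
    ∫ x, f x ∂gammaMeasure n r = ∫ x in (0 : ℝ)..T, erlangPDF n r x * f x := by
  rw [gammaMeasure, integral_withDensity_eq_integral_toReal_smul (f := gammaPDF n r)
      ((measurable_gammaPDFReal _ _).ennreal_ofReal : Measurable (gammaPDF n r))
      (ae_of_all _ fun _ => ENNReal.ofReal_lt_top)]
  have hn' : (0 : ℝ) < n := by exact_mod_cast hn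
  simp only [gammaPDF, ENNReal.toReal_ofReal (gammaPDFReal_nonneg hn' hr _), smul_eq_mul]
  rw [← setIntegral_eq_integral_of_forall_compl_eq_zero (s := Set.Icc 0 T) ?_,
    integral_Icc_eq_integral_Ioc, ← intervalIntegral.integral_of_le hT]
  · refine intervalIntegral.integral_congr fun x hx => ?_
    rw [Set.uIcc_of_le hT] at hx
    rw [gammaPDFReal_natCast hn r hx.1]
  · intro x hx
    rcases not_and_or.mp hx with hx | hx
    · simp [gammaPDFReal, hx]
    · rw [hf x (not_le.mp hx), mul_zero]

lemma ae_nonneg_gammaMeasure (a r : ℝ) : ∀ᵐ x ∂gammaMeasure a r, 0 ≤ x :=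
  (measure_eq_zero_iff_ae_notMem.mp (gammaMeasure_Iio_zero a r)).mono fun _ hx => not_lt.mp hx

theorem toReal_measure_preimage_prodMk_eq_integral {Ω α β : Type*} [MeasurableSpace Ω]
    [MeasurableSpace α] [MeasurableSpace β] {μ : Measure Ω} [IsFiniteMeasure μ]
    {X : Ω → α} {Y : Ω → β} (hX : Measurable X) (hY : Measurable Y) (hXY : IndepFun X Y μ)
    {S : Set (α × β)} (hS : MeasurableSet S) :
    (μ ((fun ω => (X ω, Y ω)) ⁻¹' S)).toReal
      = ∫ x, (μ.map Y (Prod.mk x ⁻¹' S)).toReal ∂μ.map X := by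
  rw [← Measure.map_apply (hX.prodMk hY) hS,
    hXY.map_prod_eq_prod_map_map hX.aemeasurable hY.aemeasurable, Measure.prod_apply hS,
    integral_toReal (measurable_measure_prodMk_left hS).aemeasurable
      (ae_of_all _ fun _ => measure_lt_top _ _)]

lemma measure_Iio_inter_Iic (μ : Measure ℝ) [IsProbabilityMeasure μ] [NullSingletonClass μ]
    (a b : ℝ) : μ (Set.Iio a ∩ Set.Iic b) = ENNReal.ofReal (cdf μ (min a b)) := by
  rw [ofReal_cdf, ← Set.Iic_inter_Iic]
  exact measure_congr (Iio_ae_eq_Iic.inter (ae_eq_refl _))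

lemma div_add_mul_lt_iff {a c d γ y : ℝ} (hD : 0 < c + d * y) (hΘ : 0 < a - d * γ) :
    a * y / (c + d * y) < γ ↔ y < γ * c / (a - d * γ) := by
  rw [div_lt_iff₀ hD, lt_div_iff₀ hΘ]
  constructor <;> intro h <;> linarith

lemma integral_mul_one_sub_comp_min {f h g L : ℝ → ℝ} (hf : Continuous f) (hh : Continuous h)
    (hg : Continuous g) (hL : Continuous L) {a b c : ℝ} (hab : a ≤ b) (hbc : b ≤ c)
    (hgL : ∀ x ∈ Set.Icc a b, g x ≤ L x) (hLg : ∀ x ∈ Set.Icc b c, L x ≤ g x) :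
    ∫ x in a..c, f x * (1 - h (min (g x) (L x)))
      = (∫ x in a..c, f x) - (∫ x in a..b, f x * h (g x)) - ∫ x in b..c, f x * h (L x) := by
  have hleft : ∫ x in a..b, f x * (1 - h (min (g x) (L x)))
      = (∫ x in a..b, f x) - ∫ x in a..b, f x * h (g x) := by
    rw [← intervalIntegral.integral_sub (hf.intervalIntegrable _ _)
      (Continuous.intervalIntegrable (u := fun x => f x * h (g x)) (by fun_prop) _ _)]
    refine intervalIntegral.integral_congr fun x hx => ?_
    rw [Set.uIcc_of_le hab] at hx
    simp only [min_eq_left (hgL x hx)]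
    ring
  have hright : ∫ x in b..c, f x * (1 - h (min (g x) (L x)))
      = (∫ x in b..c, f x) - ∫ x in b..c, f x * h (L x) := by
    rw [← intervalIntegral.integral_sub (hf.intervalIntegrable _ _)
      (Continuous.intervalIntegrable (u := fun x => f x * h (L x)) (by fun_prop) _ _)]
    refine intervalIntegral.integral_congr fun x hx => ?_
    rw [Set.uIcc_of_le hbc] at hx
    simp only [min_eq_right (hLg x hx)]
    ring
  have hcont : Continuous fun x => f x * (1 - h (min (g x) (L x))) := by fun_prop
  have hsplit := intervalIntegral.integral_add_adjacent_intervals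
    (hf.intervalIntegrable (μ := volume) a b) (hf.intervalIntegrable b c)
  rw [← intervalIntegral.integral_add_adjacent_intervals (hcont.intervalIntegrable a b)
      (hcont.intervalIntegrable b c), hleft, hright]
  linarith

lemma erlangTail_add_mul (n : ℕ) (ρ u v x : ℝ) :
    erlangTail n ρ (u + v * x) = exp (-(ρ * u)) * ∑ k ∈ range n, ρ ^ k / k ! *
      ∑ q ∈ range (k + 1),
        k.choose q * u ^ q * v ^ (k - q) * (x ^ (k - q) * exp (-(ρ * v * x))) := by
  have hexp : exp (-(ρ * (u + v * x))) = exp (-(ρ * u)) * exp (-(ρ * v * x)) := by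
    rw [← exp_add]; ring_nf
  rw [erlangTail, hexp, mul_sum, mul_sum]
  refine sum_congr rfl fun k _ => ?_
  rw [mul_pow, add_pow, mul_sum, sum_div, mul_sum, mul_sum, mul_sum]
  refine sum_congr rfl fun q _ => ?_
  rw [mul_pow]
  ring

theorem integral_erlangPDF_mul_erlangTail_add_mul (m n : ℕ) (l ρ u v a b : ℝ) :
    ∫ x in a..b, erlangPDF m l x * erlangTail n ρ (u + v * x)
      = l ^ m / Gamma m * exp (-(ρ * u)) * ∑ k ∈ range n, ρ ^ k / k ! *
          ∑ q ∈ range (k + 1), k.choose q * u ^ q * v ^ (k - q) *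
            ∫ x in a..b, x ^ (m - 1 + (k - q)) * exp (-((l + ρ * v) * x)) := by
  have hexp : ∀ x, exp (-(l * x)) * exp (-(ρ * v * x)) = exp (-((l + ρ * v) * x)) := fun x => by
    rw [← exp_add]; ring_nf
  have hpt : ∀ x, erlangPDF m l x * erlangTail n ρ (u + v * x)
      = ∑ k ∈ range n, ∑ q ∈ range (k + 1),
          l ^ m / Gamma m * exp (-(ρ * u)) * (ρ ^ k / k ! * (k.choose q * u ^ q * v ^ (k - q))) *
            (x ^ (m - 1 + (k - q)) * exp (-((l + ρ * v) * x))) := by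
    intro x
    simp only [erlangTail_add_mul, erlangPDF, mul_sum, ← hexp x, pow_add]
    refine sum_congr rfl fun k _ => sum_congr rfl fun q _ => ?_
    ring
  simp only [hpt]
  rw [intervalIntegral.integral_finsetSum fun k _ =>
    Continuous.intervalIntegrable (by fun_prop) _ _]
  simp only [mul_sum]
  refine sum_congr rfl fun k _ => ?_
  rw [intervalIntegral.integral_finsetSum fun q _ =>
    Continuous.intervalIntegrable (by fun_prop) _ _]
  refine sum_congr rfl fun q _ => ?_
  rw [intervalIntegral.integral_const_mul]
  ring

lemma setOf_snr_lt_and_power_le_inter_Ici {ε1 ε2 ε3 ε4 γbar Px Py Pth Θ : ℝ} (hε2 : 0 < ε2)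
    (hε3 : 0 ≤ ε3) (hε4 : 0 ≤ ε4) (hPy : 0 < Py) (hΘdef : Θ = ε1 - ε4 * γbar) (hΘ : 0 < Θ)
    {x : ℝ} (hx : 0 ≤ x) :
    {y | ε1 * y / (ε2 + ε3 * x + ε4 * y) < γbar ∧ Px * x + Py * y ≤ Pth} ∩ Set.Ici 0
      = Set.Iio (γbar * (ε2 + ε3 * x) / Θ) ∩ Set.Iic ((Pth - Px * x) / Py) ∩ Set.Ici 0 := by
  subst hΘdef
  ext y
  simp only [Set.mem_inter_iff, Set.mem_ofPred_eq, Set.mem_Iio, Set.mem_Iic, Set.mem_Ici]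
  refine and_congr_left fun hy => and_congr (div_add_mul_lt_iff (by positivity) hΘ) ?_
  rw [le_div_iff₀ hPy]
  constructor <;> intro h <;> linarith

theorem toReal_measure_snr_lt_and_power_le_eq_integral {Ω : Type*} [MeasurableSpace Ω]
    {μ : Measure Ω} [IsProbabilityMeasure μ] {X Y : Ω → ℝ} (hX : Measurable X) (hY : Measurable Y)
    (hXY : IndepFun X Y μ) {mX mY : ℕ} (hmX : 0 < mX) (hmY : 0 < mY) {rX rY : ℝ}
    (hrX : 0 < rX) (hrY : 0 < rY) (hXlaw : μ.map X = gammaMeasure mX rX)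
    (hYlaw : μ.map Y = gammaMeasure mY rY) {ε1 ε2 ε3 ε4 γbar Px Py Pth Θ : ℝ} (hε2 : 0 < ε2)
    (hε3 : 0 ≤ ε3) (hε4 : 0 ≤ ε4) (hγ : 0 ≤ γbar) (hPx : 0 < Px) (hPy : 0 < Py)
    (hPth : 0 ≤ Pth) (hΘdef : Θ = ε1 - ε4 * γbar) (hΘ : 0 < Θ) :
    (μ {ω | ε1 * Y ω / (ε2 + ε3 * X ω + ε4 * Y ω) < γbar ∧ Px * X ω + Py * Y ω ≤ Pth}).toReal
      = ∫ x in (0 : ℝ)..Pth / Px, erlangPDF mX rX x *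
          (1 - erlangTail mY rY (min (γbar * (ε2 + ε3 * x) / Θ) ((Pth - Px * x) / Py))) := by
  set S : Set (ℝ × ℝ) :=
    {p | ε1 * p.2 / (ε2 + ε3 * p.1 + ε4 * p.2) < γbar ∧ Px * p.1 + Py * p.2 ≤ Pth}
  have hS : MeasurableSet S := by measurability
  have : IsProbabilityMeasure (gammaMeasure mY rY) :=
    isProbabilityMeasure_gammaMeasure (by positivity) hrY
  have hnull : gammaMeasure mY rY (Set.Ici 0)ᶜ = 0 := by
    rw [Set.compl_Ici]; exact gammaMeasure_Iio_zero _ _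
  have hslice : ∀ x, 0 ≤ x → (gammaMeasure mY rY (Prod.mk x ⁻¹' S)).toReal
      = cdf (gammaMeasure mY rY) (min (γbar * (ε2 + ε3 * x) / Θ) ((Pth - Px * x) / Py)) := by
    intro x hx
    rw [← measure_inter_conull hnull, show Prod.mk x ⁻¹' S = {y | _ ∧ _} from rfl,
      setOf_snr_lt_and_power_le_inter_Ici hε2 hε3 hε4 hPy hΘdef hΘ hx,
      measure_inter_conull hnull, measure_Iio_inter_Iic, ENNReal.toReal_ofReal (cdf_nonneg _ _)]
  have hvanish : ∀ x, Pth / Px < x →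
      cdf (gammaMeasure mY rY) (min (γbar * (ε2 + ε3 * x) / Θ) ((Pth - Px * x) / Py)) = 0 := by
    intro x hx
    rw [div_lt_iff₀' hPx] at hx
    exact cdf_gammaMeasure_of_neg (by positivity) hrY
      (min_lt_of_right_lt (div_neg_of_neg_of_pos (by linarith) hPy))
  rw [show {ω | _ ∧ _} = (fun ω => (X ω, Y ω)) ⁻¹' S from rfl,
    toReal_measure_preimage_prodMk_eq_integral hX hY hXY hS, hXlaw, hYlaw,
    integral_congr_ae ((ae_nonneg_gammaMeasure _ _).mono hslice),
    integral_gammaMeasure_natCast_eq_intervalIntegral hmX hrX (by positivity) hvanish]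
  refine intervalIntegral.integral_congr fun x hx => ?_
  rw [Set.uIcc_of_le (by positivity), Set.mem_Icc, le_div_iff₀' hPx] at hx
  rw [cdf_gammaMeasure_natCast hmY hrY (le_min (by have := hx.1; positivity)
    (div_nonneg (by linarith) hPy.le))]

lemma snrBoundary_sub_powerBoundary {ε2 ε3 γbar Px Py Pth Θ Δ1 : ℝ} (hΘ : Θ ≠ 0) (hPy : Py ≠ 0)
    (hD : γbar * ε3 * Py + Px * Θ ≠ 0)
    (hΔ1 : Δ1 = (Pth * Θ - γbar * ε2 * Py) / (γbar * ε3 * Py + Px * Θ)) (x : ℝ) :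
    γbar * (ε2 + ε3 * x) / Θ - (Pth - Px * x) / Py
      = (γbar * ε3 * Py + Px * Θ) / (Θ * Py) * (x - Δ1) := by
  rw [hΔ1, mul_sub, div_mul_div_cancel₀' hD]
  field_simp
  ring

theorem integral_erlangPDF_mul_erlangTail_power {mX mY : ℕ} (hmX : 0 < mX)
    {ΩX ΩY Px Py Pth Δ1 Ξ : ℝ} (hΞ : Ξ = mY * Px / (ΩY * Py) - mX / ΩX) (hΞne : Ξ ≠ 0) :
    ∫ x in Δ1..Pth / Px, erlangPDF mX (mX / ΩX) x * erlangTail mY (mY / ΩY) ((Pth - Px * x) / Py)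
      = ((mX / ΩX : ℝ) ^ mX * exp (-(mY * Pth / (ΩY * Py))) / Gamma mX) *
          ∑ k ∈ range mY, ((mY / (ΩY * Py) : ℝ) ^ k / k !) *
            ∑ q ∈ range (k + 1), (k.choose q : ℝ) * Pth ^ q * (-Px) ^ (k - q) *
              ∑ t ∈ range (mX + k - q - 1 + 1),
                ((-1 : ℝ) ^ t * t ! * (mX + k - q - 1).choose t / Ξ ^ (t + 1)) *
                  (exp (Ξ * Pth / Px) * (Pth / Px) ^ (mX + k - q - 1 - t)
                    - exp (Ξ * Δ1) * Δ1 ^ (mX + k - q - 1 - t)) := by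
  have hexp : ∀ x, exp (-((mX / ΩX + mY / ΩY * (-Px / Py)) * x)) = exp (Ξ * x) := fun x => by
    rw [hΞ]; ring_nf
  simp_rw [show ∀ x, (Pth - Px * x) / Py = Pth / Py + -Px / Py * x from fun x => by ring,
    integral_erlangPDF_mul_erlangTail_add_mul, hexp, integral_pow_mul_exp _ hΞne, mul_sum]
  refine sum_congr rfl fun k _ => sum_congr rfl fun q hq => ?_
  obtain ⟨j, rfl⟩ : ∃ j, k = q + j := ⟨k - q, by simp at hq; omega⟩
  rw [show mX - 1 + (q + j - q) = mX + (q + j) - q - 1 by omega, Nat.add_sub_cancel_left]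
  refine sum_congr rfl fun t _ => ?_
  rw [← mul_div_assoc Ξ Pth Px, div_mul_div_comm (mY : ℝ) ΩY Pth Py]
  ring

theorem integral_erlangPDF_mul_erlangTail_snr {mX mY : ℕ} (hmX : 0 < mX)
    {ΩX ΩY γbar ε2 ε3 Θ Δ1 Ψ : ℝ} (hΨ : Ψ = mX / ΩX + mY * γbar * ε3 / (ΩY * Θ)) (hΨne : Ψ ≠ 0) :
    ∫ x in (0 : ℝ)..Δ1,
        erlangPDF mX (mX / ΩX) x * erlangTail mY (mY / ΩY) (γbar * (ε2 + ε3 * x) / Θ)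
      = ((mX / ΩX : ℝ) ^ mX / Gamma mX) * exp (-(mY * γbar * ε2 / (ΩY * Θ))) *
          ∑ p ∈ range mY, ((mY / (ΩY * Θ) : ℝ) ^ p / p !) *
            ∑ n ∈ range (p + 1), (p.choose n : ℝ) * γbar ^ p * ε2 ^ n * ε3 ^ (p - n) *
              lowerIncGamma ((mX : ℝ) + p - n) (Ψ * Δ1) * (Ψ ^ (mX + p - n))⁻¹ := by
  have hexp : ∀ x, exp (-((mX / ΩX + mY / ΩY * (γbar * ε3 / Θ)) * x)) = exp (-(Ψ * x)) :=
    fun x => by rw [hΨ]; ring_nf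
  simp_rw [show ∀ x, γbar * (ε2 + ε3 * x) / Θ = γbar * ε2 / Θ + γbar * ε3 / Θ * x
      from fun x => by ring,
    integral_erlangPDF_mul_erlangTail_add_mul, hexp, integral_pow_mul_exp_neg_mul _ hΨne, mul_sum]
  refine sum_congr rfl fun p _ => sum_congr rfl fun n hn => ?_
  obtain ⟨j, rfl⟩ : ∃ j, p = n + j := ⟨p - n, by simp at hn; omega⟩
  rw [show mX - 1 + (n + j - n) + 1 = mX + (n + j) - n by omega, Nat.add_sub_cancel_left,
    Nat.cast_sub (by omega), Nat.cast_add,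
    show (mY : ℝ) / ΩY * (γbar * ε2 / Θ) = mY * γbar * ε2 / (ΩY * Θ) by ring]
  ring

end

theorem stmt_4_general {Ω : Type*} [MeasurableSpace Ω]
    (ℙ : Measure Ω) [IsProbabilityMeasure ℙ]
    (X Y : Ω → ℝ) (hmX : Measurable X) (hmY : Measurable Y)
    (hindep : ProbabilityTheory.IndepFun X Y ℙ)
    (mX mY : ℕ) (hmX1 : 0 < mX) (hmY1 : 0 < mY)
    (ΩX ΩY : ℝ) (hΩX : 0 < ΩX) (hΩY : 0 < ΩY)
    (hXgamma : Measure.map X ℙ = ProbabilityTheory.gammaMeasure mX (mX / ΩX))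
    (hYgamma : Measure.map Y ℙ = ProbabilityTheory.gammaMeasure mY (mY / ΩY))
    (ε1 ε2 ε3 ε4 γbar Px Py Pth : ℝ)
    (hε2 : 0 < ε2) (hε3 : 0 < ε3) (hε4 : 0 < ε4)
    (hγ : 0 < γbar) (hPx : 0 < Px) (hPy : 0 < Py) (hPth : 0 < Pth)
    (Θ : ℝ) (hΘdef : Θ = ε1 - ε4 * γbar) (hΘ : 0 < Θ)
    (Δ1 : ℝ) (hΔ1 : Δ1 = (Pth * Θ - γbar * ε2 * Py) / (γbar * ε3 * Py + Px * Θ))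
    (hΔ1nonneg : 0 ≤ Δ1)
    (Ξ : ℝ) (hΞ : Ξ = mY * Px / (ΩY * Py) - mX / ΩX) (hΞne : Ξ ≠ 0)
    (Ψ : ℝ) (hΨ : Ψ = mX / ΩX + mY * γbar * ε3 / (ΩY * Θ)) :
    (ℙ {ω | ε1 * Y ω / (ε2 + ε3 * X ω + ε4 * Y ω) < γbar ∧
            Px * X ω + Py * Y ω ≤ Pth}).toReal =
      lowerIncGamma mX (mX * Pth / (ΩX * Px)) / Real.Gamma mX
      - ((mX / ΩX : ℝ) ^ mX * Real.exp (-(mY * Pth / (ΩY * Py))) / Real.Gamma mX) *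
          ∑ k ∈ range mY, ((mY / (ΩY * Py) : ℝ) ^ k / (Nat.factorial k : ℝ)) *
            ∑ q ∈ range (k + 1), (Nat.choose k q : ℝ) * Pth ^ q * (-Px) ^ (k - q) *
              ∑ t ∈ range (mX + k - q - 1 + 1),
                ((-1 : ℝ) ^ t * (Nat.factorial t : ℝ) *
                    (Nat.choose (mX + k - q - 1) t : ℝ) / Ξ ^ (t + 1)) *
                  (Real.exp (Ξ * Pth / Px) * (Pth / Px) ^ (mX + k - q - 1 - t)
                    - Real.exp (Ξ * Δ1) * Δ1 ^ (mX + k - q - 1 - t))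
      - ((mX / ΩX : ℝ) ^ mX / Real.Gamma mX) * Real.exp (-(mY * γbar * ε2 / (ΩY * Θ))) *
          ∑ p ∈ range mY, ((mY / (ΩY * Θ) : ℝ) ^ p / (Nat.factorial p : ℝ)) *
            ∑ n ∈ range (p + 1), (Nat.choose p n : ℝ) * γbar ^ p * ε2 ^ n * ε3 ^ (p - n) *
              lowerIncGamma ((mX : ℝ) + p - n) (Ψ * Δ1) * (Ψ ^ (mX + p - n))⁻¹ := by
  have hrX : (0 : ℝ) < mX / ΩX := by positivity
  have hrY : (0 : ℝ) < mY / ΩY := by positivity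
  have hD : 0 < γbar * ε3 * Py + Px * Θ := by positivity
  have hc : 0 < (γbar * ε3 * Py + Px * Θ) / (Θ * Py) := by positivity
  have hcross := snrBoundary_sub_powerBoundary (ε2 := ε2) hΘ.ne' hPy.ne' hD.ne' hΔ1
  have hΔ1T : Δ1 ≤ Pth / Px := by
    -- at `x = Pth / Px` the harvester line is `0` and the SNR line is nonnegative
    have h := hcross (Pth / Px)
    rw [mul_div_cancel₀ Pth hPx.ne', sub_self, zero_div, sub_zero] at h
    exact sub_nonneg.mp ((mul_nonneg_iff_of_pos_left hc).mp (h ▸ by positivity))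
  rw [toReal_measure_snr_lt_and_power_le_eq_integral hmX hmY hindep hmX1 hmY1 hrX hrY hXgamma
      hYgamma hε2 hε3.le hε4.le hγ.le hPx hPy hPth.le hΘdef hΘ,
    integral_mul_one_sub_comp_min (continuous_erlangPDF _ _) (continuous_erlangTail _ _)
      (by fun_prop) (by fun_prop) hΔ1nonneg hΔ1T
      (fun x hx => sub_nonpos.mp (by
        rw [hcross]; exact mul_nonpos_of_nonneg_of_nonpos hc.le (by linarith [hx.2])))
      (fun x hx => sub_nonneg.mp (by rw [hcross]; exact mul_nonneg hc.le (by linarith [hx.1]))),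
    integral_erlangPDF_eq_lowerIncGamma hmX1 hrX.ne',
    integral_erlangPDF_mul_erlangTail_snr hmX1 hΨ (by rw [hΨ]; positivity),
    integral_erlangPDF_mul_erlangTail_power hmX1 hΞ hΞne,
    show (mX : ℝ) / ΩX * (Pth / Px) = mX * Pth / (ΩX * Px) by ring]
  ring

/-- Lemma 1 of the paper: closed-form CDF of the linear-regime relay SNR
`γ^(lin) = ε1·Y/(ε2 + ε3·X + ε4·Y)` jointly with the non-saturation event
`Px·X + Py·Y ≤ Pth` of the nonlinear energy harvester, where `X` and `Y` are
independent Gamma random variables (Nakagami-m fading with integer shapes). -/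
theorem stmt_4 {Ω : Type*} [MeasurableSpace Ω]
    (ℙ : Measure Ω) [IsProbabilityMeasure ℙ]
    (X Y : Ω → ℝ) (hmX : Measurable X) (hmY : Measurable Y)
    (hindep : ProbabilityTheory.IndepFun X Y ℙ)
    (mX mY : ℕ) (hmX1 : 0 < mX) (hmY1 : 0 < mY)
    (ΩX ΩY : ℝ) (hΩX : 0 < ΩX) (hΩY : 0 < ΩY)
    (hXgamma : Measure.map X ℙ = ProbabilityTheory.gammaMeasure mX (mX / ΩX))
    (hYgamma : Measure.map Y ℙ = ProbabilityTheory.gammaMeasure mY (mY / ΩY))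
    (ε1 ε2 ε3 ε4 γbar Px Py Pth : ℝ)
    (hε1 : 0 < ε1) (hε2 : 0 < ε2) (hε3 : 0 < ε3) (hε4 : 0 < ε4)
    (hγ : 0 < γbar) (hPx : 0 < Px) (hPy : 0 < Py) (hPth : 0 < Pth)
    (Θ : ℝ) (hΘdef : Θ = ε1 - ε4 * γbar) (hΘ : 0 < Θ)
    (Δ1 : ℝ) (hΔ1 : Δ1 = (Pth * Θ - γbar * ε2 * Py) / (γbar * ε3 * Py + Px * Θ))
    (hΔ1nonneg : 0 ≤ Δ1)
    (Ξ : ℝ) (hΞ : Ξ = mY * Px / (ΩY * Py) - mX / ΩX) (hΞne : Ξ ≠ 0)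
    (Ψ : ℝ) (hΨ : Ψ = mX / ΩX + mY * γbar * ε3 / (ΩY * Θ)) :
    (ℙ {ω | ε1 * Y ω / (ε2 + ε3 * X ω + ε4 * Y ω) < γbar ∧
            Px * X ω + Py * Y ω ≤ Pth}).toReal =
      lowerIncGamma mX (mX * Pth / (ΩX * Px)) / Real.Gamma mX
      - ((mX / ΩX : ℝ) ^ mX * Real.exp (-(mY * Pth / (ΩY * Py))) / Real.Gamma mX) *
          ∑ k ∈ range mY, ((mY / (ΩY * Py) : ℝ) ^ k / (Nat.factorial k : ℝ)) *
            ∑ q ∈ range (k + 1), (Nat.choose k q : ℝ) * Pth ^ q * (-Px) ^ (k - q) *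
              ∑ t ∈ range (mX + k - q - 1 + 1),
                ((-1 : ℝ) ^ t * (Nat.factorial t : ℝ) *
                    (Nat.choose (mX + k - q - 1) t : ℝ) / Ξ ^ (t + 1)) *
                  (Real.exp (Ξ * Pth / Px) * (Pth / Px) ^ (mX + k - q - 1 - t)
                    - Real.exp (Ξ * Δ1) * Δ1 ^ (mX + k - q - 1 - t))
      - ((mX / ΩX : ℝ) ^ mX / Real.Gamma mX) * Real.exp (-(mY * γbar * ε2 / (ΩY * Θ))) *
          ∑ p ∈ range mY, ((mY / (ΩY * Θ) : ℝ) ^ p / (Nat.factorial p : ℝ)) *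
            ∑ n ∈ range (p + 1), (Nat.choose p n : ℝ) * γbar ^ p * ε2 ^ n * ε3 ^ (p - n) *
              lowerIncGamma ((mX : ℝ) + p - n) (Ψ * Δ1) * (Ψ ^ (mX + p - n))⁻¹ :=
  stmt_4_general ℙ X Y hmX hmY hindep mX mY hmX1 hmY1 ΩX ΩY hΩX hΩY hXgamma hYgamma ε1 ε2 ε3 ε4 γbar
    Px Py Pth hε2 hε3 hε4 hγ hPx hPy hPth Θ hΘdef hΘ Δ1 hΔ1 hΔ1nonneg Ξ hΞ hΞne Ψ hΨ
end

section
/- Let X and Y be independent nonnegative random variables, where Y has density f_Y and X has a continuous CDF F_X. Let Px, Py, Pth, Λ1, Λ2 be positive reals and Δ2 := (Λ2·Pth + Λ1·Px)/(Px + Py·Λ2). Then Pr[ X > (Y − Λ1)/Λ2 and Px·X + Py·Y > Pth ] = ∫_{Δ2}^{∞} f_Y(y)·(1 − F_X((y − Λ1)/Λ2)) dy + ∫_{0}^{Δ2} f_Y(y)·(1 − F_X((Pth − Py·y)/Px)) dy. -/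
/-!
Write `m y` for the larger of the two lower bounds `(y - Λ1)/Λ2` and `(Pth - Py y)/Px`, so
that the event is `{m Y < X}`. By independence its probability is `∫ P(X > m y) dP_Y(y)`, and
since `P_Y` has density `fY` this is `∫ fY y (1 - F_X (m y)) dy`. The difference of the two
bounds is increasing in `y` and vanishes at `Δ2`, so `m` is the second bound on `(-∞, Δ2]` and
the first on `(Δ2, ∞)`. Finally `fY = 0` a.e. on `(-∞, 0)` because `Y ≥ 0`, so the integral
over `(-∞, Δ2]` is the interval integral from `0` to `Δ2`, whatever the sign of `Δ2`.
-/

open MeasureTheory Set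
open scoped ENNReal

section Density

variable {α : Type*} [MeasurableSpace α] {μ ν : Measure α} {f : α → ℝ}

theorem integrable_of_toReal_eq_setIntegral [IsProbabilityMeasure ν]
    (hν : ∀ s, MeasurableSet s → (ν s).toReal = ∫ x in s, f x ∂μ) : Integrable f μ := by
  by_contra h
  have huniv := hν univ MeasurableSet.univ
  rw [measure_univ, Measure.restrict_univ, integral_undef h] at huniv
  exact one_ne_zero huniv

theorem ae_nonneg_of_toReal_eq_setIntegral (hf : Integrable f μ)
    (hν : ∀ s, MeasurableSet s → (ν s).toReal = ∫ x in s, f x ∂μ) : 0 ≤ᵐ[μ] f :=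
  ae_nonneg_of_forall_setIntegral_nonneg hf fun s hs _ => hν s hs ▸ ENNReal.toReal_nonneg

theorem eq_withDensity_ofReal_of_toReal_eq_setIntegral [IsFiniteMeasure ν] (hf : Integrable f μ)
    (hν : ∀ s, MeasurableSet s → (ν s).toReal = ∫ x in s, f x ∂μ) :
    ν = μ.withDensity fun x => ENNReal.ofReal (f x) := by
  ext s hs
  rw [withDensity_apply _ hs, ← ofReal_integral_eq_lintegral_ofReal hf.integrableOn
    (ae_restrict_of_ae (ae_nonneg_of_toReal_eq_setIntegral hf hν)), ← hν s hs,
    ENNReal.ofReal_toReal (measure_ne_top _ _)]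

theorem ae_eq_zero_of_measure_eq_zero (hf : Integrable f μ)
    (hν : ∀ s, MeasurableSet s → (ν s).toReal = ∫ x in s, f x ∂μ) {s : Set α}
    (hs : MeasurableSet s) (hνs : ν s = 0) : ∀ᵐ x ∂μ, x ∈ s → f x = 0 := by
  have hint : ∫ x in s, f x ∂μ = 0 := by rw [← hν s hs, hνs, ENNReal.toReal_zero]
  rw [← ae_restrict_iff' hs]
  exact (setIntegral_eq_zero_iff_of_nonneg_ae
    (ae_restrict_of_ae (ae_nonneg_of_toReal_eq_setIntegral hf hν)) hf.integrableOn).mp hint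

theorem toReal_lintegral_withDensity_ofReal (hf : AEMeasurable f μ) (hf0 : 0 ≤ᵐ[μ] f)
    {g : α → ℝ≥0∞} (hg : AEMeasurable g μ) (hg_top : ∀ x, g x ≠ ∞) :
    (∫⁻ x, g x ∂μ.withDensity fun x => ENNReal.ofReal (f x)).toReal
      = ∫ x, f x * (g x).toReal ∂μ := by
  rw [lintegral_withDensity_eq_lintegral_mul₀ hf.ennreal_ofReal hg,
    integral_eq_lintegral_of_nonneg_ae (hf0.mono fun x hx => mul_nonneg hx ENNReal.toReal_nonneg)
      (hf.mul hg.ennreal_toReal).aestronglyMeasurable]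
  congr 1
  refine lintegral_congr_ae (hf0.mono fun x hx => ?_)
  simp only [Pi.mul_apply, ENNReal.ofReal_mul hx, ENNReal.ofReal_toReal (hg_top x)]

end Density

theorem setIntegral_Iic_eq_intervalIntegral_of_ae_eq_zero {E : Type*} [NormedAddCommGroup E]
    [NormedSpace ℝ E] {f : ℝ → E} {a : ℝ} (hf : ∀ᵐ x, x < a → f x = 0) (b : ℝ) :
    ∫ x in Iic b, f x = ∫ x in a..b, f x := by
  have hf_Ici : f =ᵐ[volume] (Ici a).indicator f := hf.mono fun x hx => by
    by_cases hxa : a ≤ x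
    · rw [indicator_of_mem (mem_Ici.mpr hxa)]
    · rw [indicator_of_notMem (by simpa using hxa), hx (not_le.mp hxa)]
  have hf_ind : f =ᵐ[volume] (Ioi a).indicator f :=
    hf_Ici.trans (indicator_ae_eq_of_ae_eq_set Ioi_ae_eq_Ici.symm)
  rw [intervalIntegral.integral_congr_ae (ae_imp_of_ae_restrict (ae_restrict_of_ae hf_ind)),
    integral_congr_ae (ae_restrict_of_ae hf_ind)]
  simp only [intervalIntegral, setIntegral_indicator measurableSet_Ioi]
  rw [Iic_inter_Ioi, Ioc_inter_Ioi, Ioc_inter_Ioi, sup_idem, Ioc_eq_empty_of_le le_sup_right,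
    Measure.restrict_empty, integral_zero_measure, sub_zero]

section Saturation

variable {Px Py Pth Λ1 Λ2 : ℝ}

theorem lt_and_lt_add_iff_max_lt (hPx : 0 < Px) {x y : ℝ} :
    (y - Λ1) / Λ2 < x ∧ Pth < Px * x + Py * y ↔
      max ((y - Λ1) / Λ2) ((Pth - Py * y) / Px) < x := by
  rw [max_lt_iff, div_lt_iff₀ hPx]
  constructor <;> rintro ⟨h1, h2⟩ <;> exact ⟨h1, by linarith⟩

theorem div_le_div_iff_le_crossing_s8 (hPx : 0 < Px) (hΛ2 : 0 < Λ2) (hD : 0 < Px + Py * Λ2)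
    {y : ℝ} :
    (y - Λ1) / Λ2 ≤ (Pth - Py * y) / Px ↔ y ≤ (Λ2 * Pth + Λ1 * Px) / (Px + Py * Λ2) := by
  rw [div_le_div_iff₀ hΛ2 hPx, le_div_iff₀ hD]
  constructor <;> intro h <;> linarith

theorem max_div_eq_right_of_le_crossing (hPx : 0 < Px) (hΛ2 : 0 < Λ2) (hD : 0 < Px + Py * Λ2)
    {y : ℝ} (hy : y ≤ (Λ2 * Pth + Λ1 * Px) / (Px + Py * Λ2)) :
    max ((y - Λ1) / Λ2) ((Pth - Py * y) / Px) = (Pth - Py * y) / Px :=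
  max_eq_right ((div_le_div_iff_le_crossing_s8 hPx hΛ2 hD).mpr hy)

theorem max_div_eq_left_of_crossing_lt (hPx : 0 < Px) (hΛ2 : 0 < Λ2) (hD : 0 < Px + Py * Λ2)
    {y : ℝ} (hy : (Λ2 * Pth + Λ1 * Px) / (Px + Py * Λ2) < y) :
    max ((y - Λ1) / Λ2) ((Pth - Py * y) / Px) = (y - Λ1) / Λ2 :=
  max_eq_left (not_le.mp (mt (div_le_div_iff_le_crossing_s8 hPx hΛ2 hD).mp (not_le.mpr hy))).le

end Saturation

section Probability

open ProbabilityTheory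

theorem one_sub_cdf_eq_measureReal_Ioi (μ : Measure ℝ) [IsProbabilityMeasure μ] (t : ℝ) :
    1 - cdf μ t = μ.real (Ioi t) := by
  rw [cdf_eq_real, ← probReal_compl_eq_one_sub measurableSet_Iic, compl_Iic]

theorem MeasureTheory.Integrable.mul_one_sub_cdf_comp {f : ℝ → ℝ} (hf : Integrable f)
    (μ : Measure ℝ) [IsProbabilityMeasure μ] {m : ℝ → ℝ} (hm : Measurable m) :
    Integrable fun y => f y * (1 - cdf μ (m y)) := by
  have hmeas : Measurable fun y => 1 - cdf μ (m y) :=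
    measurable_const.sub ((monotone_cdf μ).measurable.comp hm)
  refine hf.mul_bdd (c := 1) hmeas.aestronglyMeasurable
    (Filter.Eventually.of_forall fun y => ?_)
  rw [Real.norm_eq_abs, abs_le]
  constructor <;> linarith [cdf_nonneg μ (m y), cdf_le_one μ (m y)]

variable {Ω : Type*} [MeasurableSpace Ω] {P : Measure Ω} {X Y : Ω → ℝ} {m : ℝ → ℝ}

theorem ProbabilityTheory.IndepFun.measure_comp_lt_eq_lintegral [IsFiniteMeasure P]
    (hX : Measurable X) (hY : Measurable Y) (hXY : IndepFun X Y P) (hm : Measurable m) :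
    P {ω | m (Y ω) < X ω} = ∫⁻ y, P.map X (Ioi (m y)) ∂P.map Y := by
  have hA : MeasurableSet {p : ℝ × ℝ | m p.2 < p.1} :=
    measurableSet_lt (hm.comp measurable_snd) measurable_fst
  change P ((fun ω => (X ω, Y ω)) ⁻¹' {p | m p.2 < p.1}) = _
  rw [← Measure.map_apply (hX.prodMk hY) hA,
    hXY.map_prod_eq_prod_map_map hX.aemeasurable hY.aemeasurable, Measure.prod_apply_symm hA]
  rfl

theorem ProbabilityTheory.IndepFun.measureReal_comp_lt_eq_integral [IsProbabilityMeasure P]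
    (hX : Measurable X) (hY : Measurable Y) (hXY : IndepFun X Y P) {f : ℝ → ℝ}
    (hf : ∀ s, MeasurableSet s → (P.map Y s).toReal = ∫ y in s, f y) (hm : Measurable m) :
    P.real {ω | m (Y ω) < X ω} = ∫ y, f y * (1 - cdf (P.map X) (m y)) := by
  have := Measure.isProbabilityMeasure_map (μ := P) hX.aemeasurable
  have := Measure.isProbabilityMeasure_map (μ := P) hY.aemeasurable
  have hfi : Integrable f := integrable_of_toReal_eq_setIntegral hf
  have hmeas : Measurable fun y => P.map X (Ioi (m y)) :=
    (Antitone.measurable fun _ _ hst => measure_mono (Ioi_subset_Ioi hst)).comp hm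
  simp_rw [one_sub_cdf_eq_measureReal_Ioi]
  rw [measureReal_def, hXY.measure_comp_lt_eq_lintegral hX hY hm,
    eq_withDensity_ofReal_of_toReal_eq_setIntegral hfi hf,
    toReal_lintegral_withDensity_ofReal hfi.aemeasurable
      (ae_nonneg_of_toReal_eq_setIntegral hfi hf) hmeas.aemeasurable fun _ => measure_ne_top _ _]
  rfl

end Probability

theorem stmt_8_general {Ω : Type*} [MeasurableSpace Ω]
    (ℙ : Measure Ω) [IsProbabilityMeasure ℙ]
    (X Y : Ω → ℝ) (hmX : Measurable X) (hmY : Measurable Y)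
    (hindep : ProbabilityTheory.IndepFun X Y ℙ)
    (hYpos : ∀ᵐ ω ∂ℙ, 0 ≤ Y ω)
    (fY : ℝ → ℝ)
    (hfY : ∀ s : Set ℝ, MeasurableSet s → (ℙ (Y ⁻¹' s)).toReal = ∫ y in s, fY y)
    (FX : ℝ → ℝ)
    (hFX : ∀ x : ℝ, FX x = (ℙ {ω | X ω ≤ x}).toReal)
    (Px Py Pth Λ1 Λ2 : ℝ)
    (hPx : 0 < Px) (hPy : 0 < Py) (hΛ2 : 0 < Λ2)
    (Δ2 : ℝ) (hΔ2 : Δ2 = (Λ2 * Pth + Λ1 * Px) / (Px + Py * Λ2)) :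
    (ℙ {ω | X ω > (Y ω - Λ1) / Λ2 ∧ Px * X ω + Py * Y ω > Pth}).toReal =
      (∫ y in Set.Ioi Δ2, fY y * (1 - FX ((y - Λ1) / Λ2))) +
      ∫ y in (0 : ℝ)..Δ2, fY y * (1 - FX ((Pth - Py * y) / Px)) := by
  set m : ℝ → ℝ := fun y => max ((y - Λ1) / Λ2) ((Pth - Py * y) / Px)
  have hm : Measurable m := by fun_prop
  have hD : 0 < Px + Py * Λ2 := by positivity
  have := Measure.isProbabilityMeasure_map (μ := ℙ) hmX.aemeasurable
  have := Measure.isProbabilityMeasure_map (μ := ℙ) hmY.aemeasurable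
  have hlaw : ∀ s, MeasurableSet s → (ℙ.map Y s).toReal = ∫ y in s, fY y := fun s hs => by
    rw [Measure.map_apply hmY hs]
    exact hfY s hs
  have hfi : Integrable fY := integrable_of_toReal_eq_setIntegral hlaw
  have hfY_neg : ∀ᵐ y, y < 0 → fY y = 0 := by
    refine ae_eq_zero_of_measure_eq_zero (s := Iio 0) hfi hlaw measurableSet_Iio ?_
    rw [Measure.map_apply hmY measurableSet_Iio]
    exact measure_mono_null (fun ω hω => not_le.mpr hω) (ae_iff.mp hYpos)
  have hevent : {ω | X ω > (Y ω - Λ1) / Λ2 ∧ Px * X ω + Py * Y ω > Pth} =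
      {ω | m (Y ω) < X ω} := by
    ext ω
    exact lt_and_lt_add_iff_max_lt hPx
  obtain rfl : FX = ProbabilityTheory.cdf (ℙ.map X) := funext fun x => by
    rw [hFX, ProbabilityTheory.cdf_eq_real, map_measureReal_apply hmX measurableSet_Iic]
    rfl
  subst hΔ2
  rw [hevent, ← measureReal_def, hindep.measureReal_comp_lt_eq_integral hmX hmY hlaw hm,
    ← integral_add_compl measurableSet_Iic (hfi.mul_one_sub_cdf_comp _ hm), compl_Iic, add_comm]
  congr 1
  · exact setIntegral_congr_fun measurableSet_Ioi fun y hy => by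
      simp only [m, max_div_eq_left_of_crossing_lt hPx hΛ2 hD hy]
  · rw [← setIntegral_Iic_eq_intervalIntegral_of_ae_eq_zero
      (hfY_neg.mono fun y hy hy0 => by rw [hy hy0, zero_mul])]
    exact setIntegral_congr_fun measurableSet_Iic fun y hy => by
      simp only [m, max_div_eq_right_of_le_crossing hPx hΛ2 hD hy]

/-- Double-integral decomposition used to compute the CDF of the
saturated-regime relay SNR jointly with the saturation event
`Px·X + Py·Y > Pth`: the plane splits at the crossing point `Δ2` of the lower
bounds `(y − Λ1)/Λ2` and `(Pth − Py·y)/Px` on `X`. -/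
theorem stmt_8 {Ω : Type*} [MeasurableSpace Ω]
    (ℙ : Measure Ω) [IsProbabilityMeasure ℙ]
    (X Y : Ω → ℝ) (hmX : Measurable X) (hmY : Measurable Y)
    (hindep : ProbabilityTheory.IndepFun X Y ℙ)
    (hXpos : ∀ᵐ ω ∂ℙ, 0 ≤ X ω) (hYpos : ∀ᵐ ω ∂ℙ, 0 ≤ Y ω)
    (fY : ℝ → ℝ)
    (hfY : ∀ s : Set ℝ, MeasurableSet s → (ℙ (Y ⁻¹' s)).toReal = ∫ y in s, fY y)
    (FX : ℝ → ℝ) (hFXcont : Continuous FX)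
    (hFX : ∀ x : ℝ, FX x = (ℙ {ω | X ω ≤ x}).toReal)
    (Px Py Pth Λ1 Λ2 : ℝ)
    (hPx : 0 < Px) (hPy : 0 < Py) (hPth : 0 < Pth) (hΛ1 : 0 < Λ1) (hΛ2 : 0 < Λ2)
    (Δ2 : ℝ) (hΔ2 : Δ2 = (Λ2 * Pth + Λ1 * Px) / (Px + Py * Λ2)) :
    (ℙ {ω | X ω > (Y ω - Λ1) / Λ2 ∧ Px * X ω + Py * Y ω > Pth}).toReal =
      (∫ y in Set.Ioi Δ2, fY y * (1 - FX ((y - Λ1) / Λ2))) +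
      ∫ y in (0 : ℝ)..Δ2, fY y * (1 - FX ((Pth - Py * y) / Px)) :=
  stmt_8_general ℙ X Y hmX hmY hindep hYpos fY hfY FX hFX Px Py Pth Λ1 Λ2 hPx hPy hΛ2 Δ2 hΔ2
end
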